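/- Let τ > 0, a > 0, A₀ > 0, p > 1, and let v : (0,∞) → [0,∞) be measurable. Define F(z) = A₀ a z ∫_{τz}^∞ v(s) s^{−2} ds for z > 0. Then (∫₀^∞ F(z)^p dz)^{1/p} ≤ (p A₀ a / ((p+1) τ^{1+1/p})) (∫₀^∞ v(s)^p ds)^{1/p}. -/

import Mathlib

/-!
Substituting `w = τ z` gives `∫₀^∞ F^p = (A₀ a)^p τ^{-(p+1)} ∫₀^∞ (w ∫_w^∞ v(s) s⁻² ds)^p dw`,
and the dual Hardy inequality
`∫₀^∞ x^c (∫_x^∞ g)^p dx ≤ (p / (c + 1))^p ∫₀^∞ s^(c+p) g(s)^p ds` with `c = p`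
bounds the last integral by `(p / (p + 1))^p ∫₀^∞ v^p`.
Hardy's inequality is proved by the Schur test: Hölder's inequality against a power weight
bounds the inner integral pointwise, and Tonelli's theorem integrates the bound exactly.
-/

open MeasureTheory Set ENNReal

theorem ENNReal.rpow_lintegral_le_mul_lintegral_rpow_mul_rpow {α : Type*} [MeasurableSpace α]
    {μ : Measure α} {p : ℝ} (hp : 1 ≤ p) {f w : α → ℝ≥0∞} (hf : AEMeasurable f μ)
    (hw : AEMeasurable w μ) (hw_pos : ∀ᵐ a ∂μ, w a ≠ 0) (hw_fin : ∀ᵐ a ∂μ, w a ≠ ∞) :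
    (∫⁻ a, f a ∂μ) ^ p ≤ (∫⁻ a, w a ∂μ) ^ (p - 1) * ∫⁻ a, f a ^ p * w a ^ (1 - p) ∂μ := by
  have hp0 : 0 < p := by linarith
  have hsplit : ∀ᵐ a ∂μ, f a = (f a ^ p * w a ^ (1 - p)) ^ p⁻¹ * w a ^ (1 - p⁻¹) := by
    filter_upwards [hw_pos, hw_fin] with a h0 htop
    rw [ENNReal.mul_rpow_of_nonneg _ _ (by positivity), ← ENNReal.rpow_mul, ← ENNReal.rpow_mul,
      mul_inv_cancel₀ hp0.ne', ENNReal.rpow_one, mul_assoc, ← ENNReal.rpow_add _ _ h0 htop,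
      show (1 - p) * p⁻¹ + (1 - p⁻¹) = 0 by field_simp; ring, ENNReal.rpow_zero, mul_one]
  have holder := ENNReal.lintegral_mul_norm_pow_le ((hf.pow_const p).mul (hw.pow_const (1 - p)))
    hw (inv_nonneg.2 hp0.le) (sub_nonneg.2 (inv_le_one_of_one_le₀ hp)) (add_sub_cancel _ _)
  simp only [Pi.mul_apply] at holder
  rw [← lintegral_congr_ae hsplit] at holder
  calc (∫⁻ a, f a ∂μ) ^ p
      ≤ ((∫⁻ a, f a ^ p * w a ^ (1 - p) ∂μ) ^ p⁻¹ * (∫⁻ a, w a ∂μ) ^ (1 - p⁻¹)) ^ p :=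
        ENNReal.rpow_le_rpow holder hp0.le
    _ = _ := by
      rw [ENNReal.mul_rpow_of_nonneg _ _ hp0.le, ← ENNReal.rpow_mul, ← ENNReal.rpow_mul,
        inv_mul_cancel₀ hp0.ne', ENNReal.rpow_one, mul_comm, sub_mul, one_mul,
        inv_mul_cancel₀ hp0.ne']

theorem lintegral_Ioi_mul_lintegral_Ioi_swap (a : ℝ) {φ ψ : ℝ → ℝ≥0∞} (hφ : Measurable φ)
    (hψ : Measurable ψ) :
    ∫⁻ x in Ioi a, φ x * ∫⁻ s in Ioi x, ψ s = ∫⁻ s in Ioi a, ψ s * ∫⁻ x in Ioo a s, φ x := by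
  set T : Set (ℝ × ℝ) := {q | a < q.1 ∧ q.1 < q.2}
  have hT : MeasurableSet T :=
    (measurableSet_lt measurable_const measurable_fst).inter
      (measurableSet_lt measurable_fst measurable_snd)
  set H : ℝ → ℝ → ℝ≥0∞ := fun x s => T.indicator (fun q => φ q.1 * ψ q.2) (x, s)
  have hH : Measurable (Function.uncurry H) :=
    ((hφ.comp measurable_fst).mul (hψ.comp measurable_snd)).indicator hT
  calc ∫⁻ x in Ioi a, φ x * ∫⁻ s in Ioi x, ψ s
      = ∫⁻ x, ∫⁻ s, H x s := by
        rw [← lintegral_indicator measurableSet_Ioi]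
        congr 1 with x
        by_cases hx : a < x
        · rw [indicator_of_mem (mem_Ioi.2 hx), ← lintegral_const_mul _ hψ,
            ← lintegral_indicator measurableSet_Ioi]
          congr 1 with s
          simp [H, T, indicator_apply, hx]
        · simp [H, T, hx]
    _ = ∫⁻ s, ∫⁻ x, H x s := lintegral_lintegral_swap hH.aemeasurable
    _ = ∫⁻ s in Ioi a, ψ s * ∫⁻ x in Ioo a s, φ x := by
        rw [← lintegral_indicator measurableSet_Ioi]
        congr 1 with s
        by_cases hs : a < s
        · rw [indicator_of_mem (mem_Ioi.2 hs), ← lintegral_const_mul _ hφ,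
            ← lintegral_indicator measurableSet_Ioo]
          congr 1 with x
          simp [H, T, indicator_apply, mul_comm]
        · have hH0 : ∀ x, H x s = 0 := fun x =>
            indicator_of_notMem (fun h => hs (h.1.trans h.2)) _
          simp [hH0, hs]

theorem lintegral_Ioi_ofReal_rpow {b x : ℝ} (hb : b < -1) (hx : 0 < x) :
    ∫⁻ s in Ioi x, ENNReal.ofReal s ^ b =
      ENNReal.ofReal (-(b + 1))⁻¹ * ENNReal.ofReal x ^ (b + 1) := by
  have hpos : ∀ s ∈ Ioi x, 0 < s := fun s hs => hx.trans hs
  rw [setLIntegral_congr_fun measurableSet_Ioi fun s hs => ENNReal.ofReal_rpow_of_pos (hpos s hs),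
    ← ofReal_integral_eq_lintegral_ofReal (integrableOn_Ioi_rpow_of_lt hb hx)
      (ae_restrict_of_forall_mem measurableSet_Ioi fun s hs =>
        (Real.rpow_pos_of_pos (hpos s hs) _).le),
    integral_Ioi_rpow_of_lt hb hx, ENNReal.ofReal_rpow_of_pos hx,
    ← ENNReal.ofReal_mul (inv_nonneg.2 (by linarith))]
  congr 1
  rw [neg_div, ← div_neg, div_eq_inv_mul]

theorem lintegral_Ioo_zero_ofReal_rpow {e s : ℝ} (he : -1 < e) (hs : 0 < s) :
    ∫⁻ x in Ioo 0 s, ENNReal.ofReal x ^ e =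
      ENNReal.ofReal (e + 1)⁻¹ * ENNReal.ofReal s ^ (e + 1) := by
  have hint : IntegrableOn (fun x => x ^ e) (Ioc 0 s) :=
    (intervalIntegral.intervalIntegrable_rpow' he).1
  rw [setLIntegral_congr_fun measurableSet_Ioo fun x hx => ENNReal.ofReal_rpow_of_pos hx.1,
    ← ofReal_integral_eq_lintegral_ofReal (hint.mono_set Ioo_subset_Ioc_self)
      (ae_restrict_of_forall_mem measurableSet_Ioo fun x hx => (Real.rpow_pos_of_pos hx.1 _).le),
    ← integral_Ioc_eq_integral_Ioo, ← intervalIntegral.integral_of_le hs.le,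
    integral_rpow (Or.inl he), Real.zero_rpow (by linarith), ENNReal.ofReal_rpow_of_pos hs,
    ← ENNReal.ofReal_mul (inv_nonneg.2 (by linarith))]
  congr 1
  rw [sub_zero, div_eq_inv_mul]

theorem lintegral_Ioi_ofReal_rpow_mul_lintegral_Ioi {e : ℝ} (he : -1 < e) {h : ℝ → ℝ≥0∞}
    (hh : Measurable h) :
    ∫⁻ x in Ioi 0, ENNReal.ofReal x ^ e * ∫⁻ s in Ioi x, h s =
      ENNReal.ofReal (e + 1)⁻¹ * ∫⁻ s in Ioi 0, ENNReal.ofReal s ^ (e + 1) * h s := by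
  rw [lintegral_Ioi_mul_lintegral_Ioi_swap 0 (by fun_prop) hh,
    ← lintegral_const_mul' _ _ ofReal_ne_top]
  refine setLIntegral_congr_fun measurableSet_Ioi fun s hs => ?_
  rw [lintegral_Ioo_zero_ofReal_rpow he hs]
  ring

theorem rpow_lintegral_Ioi_le {p b x : ℝ} (hp : 1 ≤ p) (hb : 1 < b) (hx : 0 < x)
    {g : ℝ → ℝ≥0∞} (hg : AEMeasurable g (volume.restrict (Ioi x))) :
    (∫⁻ s in Ioi x, g s) ^ p ≤
      (ENNReal.ofReal (b - 1)⁻¹ * ENNReal.ofReal x ^ (1 - b)) ^ (p - 1) *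
        ∫⁻ s in Ioi x, ENNReal.ofReal s ^ (b * (p - 1)) * g s ^ p := by
  have hpos : ∀ s ∈ Ioi x, ENNReal.ofReal s ≠ 0 := fun s hs =>
    (ENNReal.ofReal_pos.2 (hx.trans hs)).ne'
  have hweight : ∫⁻ s in Ioi x, ENNReal.ofReal s ^ (-b) =
      ENNReal.ofReal (b - 1)⁻¹ * ENNReal.ofReal x ^ (1 - b) := by
    rw [lintegral_Ioi_ofReal_rpow (by linarith) hx, show -(-b + 1) = b - 1 by ring,
      show -b + 1 = 1 - b by ring]
  have hdual : ∫⁻ s in Ioi x, g s ^ p * (ENNReal.ofReal s ^ (-b)) ^ (1 - p) =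
      ∫⁻ s in Ioi x, ENNReal.ofReal s ^ (b * (p - 1)) * g s ^ p := by
    refine setLIntegral_congr_fun measurableSet_Ioi fun s _ => ?_
    rw [← ENNReal.rpow_mul, mul_comm, show -b * (1 - p) = b * (p - 1) by ring]
  rw [← hweight, ← hdual]
  exact ENNReal.rpow_lintegral_le_mul_lintegral_rpow_mul_rpow hp hg (by fun_prop)
    ((ae_restrict_mem measurableSet_Ioi).mono fun s hs => by simp [hpos s hs])
    ((ae_restrict_mem measurableSet_Ioi).mono fun s hs =>
      ENNReal.rpow_ne_top_of_ne_zero (hpos s hs) ofReal_ne_top)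

theorem hardy_inequality_Ioi {p c : ℝ} (hp : 1 ≤ p) (hc : -1 < c) {g : ℝ → ℝ≥0∞}
    (hg : Measurable g) :
    ∫⁻ x in Ioi 0, ENNReal.ofReal x ^ c * (∫⁻ s in Ioi x, g s) ^ p
      ≤ ENNReal.ofReal (p / (c + 1)) ^ p *
          ∫⁻ s in Ioi 0, ENNReal.ofReal s ^ (c + p) * g s ^ p := by
  have hp0 : 0 < p := by linarith
  have hc1 : 0 < c + 1 := by linarith
  set K := p / (c + 1) with hK
  have hK0 : ENNReal.ofReal K ≠ 0 := (ENNReal.ofReal_pos.2 (div_pos hp0 hc1)).ne'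
  -- Hölder against the weight `s ^ (-b)`; this choice of `b` makes the constant sharp.
  set b := 1 + (c + 1) / p with hb
  set e := (c + 1) / p - 1 with he
  have he1 : -1 < e := by rw [he]; linarith [div_pos hc1 hp0]
  have hpoint : ∀ x ∈ Ioi (0 : ℝ), ENNReal.ofReal x ^ c * (∫⁻ s in Ioi x, g s) ^ p ≤
      ENNReal.ofReal K ^ (p - 1) *
        (ENNReal.ofReal x ^ e * ∫⁻ s in Ioi x, ENNReal.ofReal s ^ (b * (p - 1)) * g s ^ p) := by
    intro x hx
    have hx0 : ENNReal.ofReal x ≠ 0 := (ENNReal.ofReal_pos.2 hx).ne'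
    have hbK : (b - 1)⁻¹ = K := by rw [hb, add_sub_cancel_left, inv_div]
    have hx_exp : c + (1 - b) * (p - 1) = e := by rw [hb, he]; field_simp; ring
    calc ENNReal.ofReal x ^ c * (∫⁻ s in Ioi x, g s) ^ p
        ≤ ENNReal.ofReal x ^ c *
            ((ENNReal.ofReal (b - 1)⁻¹ * ENNReal.ofReal x ^ (1 - b)) ^ (p - 1) *
              ∫⁻ s in Ioi x, ENNReal.ofReal s ^ (b * (p - 1)) * g s ^ p) := by
          gcongr
          exact rpow_lintegral_Ioi_le hp (by linarith [div_pos hc1 hp0]) hx hg.aemeasurable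
      _ = _ := by
          rw [hbK, ENNReal.mul_rpow_of_nonneg _ _ (by linarith), ← ENNReal.rpow_mul, ← hx_exp,
            ENNReal.rpow_add _ _ hx0 ofReal_ne_top]
          ring
  have hs_exp : ∀ s, 0 < s →
      ENNReal.ofReal s ^ (e + 1) * (ENNReal.ofReal s ^ (b * (p - 1)) * g s ^ p) =
        ENNReal.ofReal s ^ (c + p) * g s ^ p := fun s hs => by
    rw [← mul_assoc, ← ENNReal.rpow_add _ _ (ENNReal.ofReal_pos.2 hs).ne' ofReal_ne_top]
    congr 2
    rw [hb, he]
    field_simp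
    ring
  calc ∫⁻ x in Ioi 0, ENNReal.ofReal x ^ c * (∫⁻ s in Ioi x, g s) ^ p
      ≤ ∫⁻ x in Ioi 0, ENNReal.ofReal K ^ (p - 1) *
          (ENNReal.ofReal x ^ e * ∫⁻ s in Ioi x, ENNReal.ofReal s ^ (b * (p - 1)) * g s ^ p) :=
        setLIntegral_mono' measurableSet_Ioi hpoint
    _ = ENNReal.ofReal K ^ (p - 1) * ENNReal.ofReal K *
          ∫⁻ s in Ioi 0, ENNReal.ofReal s ^ (c + p) * g s ^ p := by
        rw [lintegral_const_mul' _ _ (ENNReal.rpow_ne_top_of_ne_zero hK0 ofReal_ne_top),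
          lintegral_Ioi_ofReal_rpow_mul_lintegral_Ioi he1 (by fun_prop),
          show (e + 1)⁻¹ = K by rw [he, hK, sub_add_cancel, inv_div], mul_assoc,
          setLIntegral_congr_fun measurableSet_Ioi hs_exp]
    _ = _ := by
        nth_rw 2 [← ENNReal.rpow_one (ENNReal.ofReal K)]
        rw [← ENNReal.rpow_add _ _ hK0 ofReal_ne_top, sub_add_cancel]

theorem lintegral_Ioi_zero_comp_mul_left {τ : ℝ} (hτ : 0 < τ) (G : ℝ → ℝ≥0∞) :
    ∫⁻ z in Ioi 0, G (τ * z) = ENNReal.ofReal τ⁻¹ * ∫⁻ w in Ioi 0, G w := by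
  have h := lintegral_image_eq_lintegral_abs_deriv_mul (s := Ioi 0) (f' := fun _ => τ)
    measurableSet_Ioi (fun z _ => (hasDerivAt_const_mul τ).hasDerivWithinAt)
    (mul_right_injective₀ hτ.ne').injOn G
  rw [image_const_mul_Ioi_zero hτ, abs_of_pos hτ, lintegral_const_mul' _ _ ofReal_ne_top] at h
  rw [h, ← mul_assoc, ← ENNReal.ofReal_mul (inv_nonneg.2 hτ.le), inv_mul_cancel₀ hτ.ne',
    ENNReal.ofReal_one, one_mul]

theorem hardy_inequality_Ioi_mul_inv_sq {p : ℝ} (hp : 1 ≤ p) {g : ℝ → ℝ≥0∞}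
    (hg : Measurable g) :
    ∫⁻ w in Ioi 0, ENNReal.ofReal w ^ p *
        (∫⁻ s in Ioi w, g s * ENNReal.ofReal (s ^ (-2 : ℝ))) ^ p
      ≤ ENNReal.ofReal (p / (p + 1)) ^ p * ∫⁻ s in Ioi 0, g s ^ p := by
  have hp0 : 0 < p := by linarith
  refine (hardy_inequality_Ioi hp (by linarith) (by fun_prop)).trans_eq ?_
  congr 1
  refine setLIntegral_congr_fun measurableSet_Ioi fun s hs => ?_
  have hs0 : ENNReal.ofReal s ≠ 0 := (ENNReal.ofReal_pos.2 hs).ne'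
  simp only [ENNReal.mul_rpow_of_nonneg _ _ hp0.le, ← ENNReal.ofReal_rpow_of_pos hs,
    ← ENNReal.rpow_mul]
  rw [mul_left_comm, ← ENNReal.rpow_add _ _ hs0 ofReal_ne_top,
    show p + p + -2 * p = 0 by ring, ENNReal.rpow_zero, mul_one]

theorem ofReal_mul_div_mul_rpow_one_add_inv_rpow {c τ p : ℝ} (hτ : 0 < τ) (hp : 0 < p) :
    ENNReal.ofReal (p * c / ((p + 1) * τ ^ (1 + 1 / p))) ^ p =
      (ENNReal.ofReal c * ENNReal.ofReal τ⁻¹) ^ p * ENNReal.ofReal τ⁻¹ *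
        ENNReal.ofReal (p / (p + 1)) ^ p := by
  have hτ0 : ENNReal.ofReal τ⁻¹ ≠ 0 := (ENNReal.ofReal_pos.2 (inv_pos.2 hτ)).ne'
  have hsplit : p * c / ((p + 1) * τ ^ (1 + 1 / p)) = c * (p / (p + 1) * τ⁻¹ ^ (1 + 1 / p)) := by
    rw [Real.inv_rpow hτ.le]
    field_simp
  rw [hsplit, ENNReal.ofReal_mul' (by positivity), ENNReal.ofReal_mul (by positivity),
    ← ENNReal.ofReal_rpow_of_pos (inv_pos.2 hτ)]
  simp only [ENNReal.mul_rpow_of_nonneg _ _ hp.le, ← ENNReal.rpow_mul]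
  rw [show (1 + 1 / p) * p = p + 1 by field_simp, ENNReal.rpow_add _ _ hτ0 ofReal_ne_top,
    ENNReal.rpow_one]
  ring

theorem stein_core_estimate_general (τ a A₀ p : ℝ) (hτ : 0 < τ)
    (hp : 1 < p) (v : ℝ → ℝ) (hv : Measurable v)
    (F : ℝ → ℝ≥0∞)
    (hF : ∀ z, F z = ENNReal.ofReal (A₀ * a) * ENNReal.ofReal z *
      ∫⁻ s in Ioi (τ * z), ENNReal.ofReal (v s) * ENNReal.ofReal (s ^ (-2 : ℝ))) :
    (∫⁻ z in Ioi (0:ℝ), F z ^ p) ^ (1 / p)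
      ≤ ENNReal.ofReal (p * A₀ * a / ((p + 1) * τ ^ (1 + 1 / p))) *
        (∫⁻ s in Ioi (0:ℝ), ENNReal.ofReal (v s) ^ p) ^ (1 / p) := by
  have hp0 : 0 < p := by linarith
  set M := ENNReal.ofReal (p * A₀ * a / ((p + 1) * τ ^ (1 + 1 / p)))
  set V := ∫⁻ s in Ioi 0, ENNReal.ofReal (v s) ^ p
  set C := ENNReal.ofReal (A₀ * a) * ENNReal.ofReal τ⁻¹
  set G : ℝ → ℝ≥0∞ := fun w => ENNReal.ofReal w ^ p *
    (∫⁻ s in Ioi w, ENNReal.ofReal (v s) * ENNReal.ofReal (s ^ (-2 : ℝ))) ^ p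
  have hFG : ∀ z, F z ^ p = C ^ p * G (τ * z) := by
    intro z
    have hz : ENNReal.ofReal z = ENNReal.ofReal τ⁻¹ * ENNReal.ofReal (τ * z) := by
      rw [← ENNReal.ofReal_mul (inv_nonneg.2 hτ.le), inv_mul_cancel_left₀ hτ.ne']
    simp only [hF z, hz, G, C, ENNReal.mul_rpow_of_nonneg _ _ hp0.le]
    ring
  have hbound : ∫⁻ z in Ioi 0, F z ^ p ≤ M ^ p * V := by
    simp only [M, mul_assoc p, ofReal_mul_div_mul_rpow_one_add_inv_rpow hτ hp0, hFG]
    rw [lintegral_const_mul' _ _ (by finiteness), lintegral_Ioi_zero_comp_mul_left hτ, mul_assoc,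
      mul_assoc]
    gcongr
    exact hardy_inequality_Ioi_mul_inv_sq hp.le (by fun_prop)
  calc (∫⁻ z in Ioi 0, F z ^ p) ^ (1 / p) ≤ (M ^ p * V) ^ (1 / p) := by gcongr
    _ = M * V ^ (1 / p) := by
      rw [ENNReal.mul_rpow_of_nonneg _ _ (by positivity), ← ENNReal.rpow_mul,
        mul_one_div_cancel hp0.ne', ENNReal.rpow_one]

/-- The one-dimensional core estimate for Stein's extension operator,
a consequence of Hardy's inequality. -/
theorem stein_core_estimate (τ a A₀ p : ℝ) (hτ : 0 < τ) (ha : 0 < a) (hA₀ : 0 < A₀)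
    (hp : 1 < p) (v : ℝ → ℝ) (hv : Measurable v) (hvnn : ∀ s, 0 ≤ v s)
    (F : ℝ → ℝ≥0∞)
    (hF : ∀ z, F z = ENNReal.ofReal (A₀ * a) * ENNReal.ofReal z *
      ∫⁻ s in Ioi (τ * z), ENNReal.ofReal (v s) * ENNReal.ofReal (s ^ (-2 : ℝ))) :
    (∫⁻ z in Ioi (0:ℝ), F z ^ p) ^ (1 / p)
      ≤ ENNReal.ofReal (p * A₀ * a / ((p + 1) * τ ^ (1 + 1 / p))) *
        (∫⁻ s in Ioi (0:ℝ), ENNReal.ofReal (v s) ^ p) ^ (1 / p) :=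
  stein_core_estimate_general τ a A₀ p hτ hp v hv F hF
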